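/- arXiv:1910.13870 — 4 statements merged into one kernel-verified Lean document; each statement's English description precedes it below -/
import Mathlib

section
/- Let u : Ω → ℝ be convex. Then: (i) the extension ũ is convex on ℝ^d and ũ = u on Ω; (ii) for every x ∈ Ω one has ∂u(x) = χ_u(x); (iii) if in addition u is bounded on Ω and the set ∂u(Ω) is bounded in ℝ^d, then ũ is real-valued and continuous on all of ℝ^d; (iv) if u is the restriction to Ω of a function that is continuous on Ω̄ and convex on Ω̄, then ũ coincides with that function on Ω̄. -/
open Set MeasureTheory Filter Topology

noncomputable section

abbrev Euc (d : ℕ) := EuclideanSpace ℝ (Fin d)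

/-- Subdifferential of `v` at `x` relative to the set `C`. -/
def subdiff {d : ℕ} (C : Set (Euc d)) (v : Euc d → ℝ) (x : Euc d) : Set (Euc d) :=
  {p | ∀ y ∈ C, v x + (inner ℝ p (y - x) : ℝ) ≤ v y}

/-- `⋃ x ∈ S, subdiff C v x`. -/
def subdiffSet {d : ℕ} (C : Set (Euc d)) (v : Euc d → ℝ) (S : Set (Euc d)) : Set (Euc d) :=
  ⋃ x ∈ S, subdiff C v x

/-- The convex extension `ũ` of `u : Ω → ℝ` (may take the value `+∞`, hence `EReal`). -/
def extFun {d : ℕ} (Ω : Set (Euc d)) (u : Euc d → ℝ) (x : Euc d) : EReal :=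
  ⨆ y ∈ Ω, ⨆ q ∈ subdiff Ω u y, ((u y + (inner ℝ q (x - y) : ℝ) : ℝ) : EReal)

/-- `χ_u(x)`: the subdifferential of the extension `ũ` at `x`. -/
def chiSub {d : ℕ} (Ω : Set (Euc d)) (u : Euc d → ℝ) (x : Euc d) : Set (Euc d) :=
  {p | ∀ z : Euc d, extFun Ω u x + (((inner ℝ p (z - x) : ℝ) : ℝ) : EReal) ≤ extFun Ω u z}

def chiSubSet {d : ℕ} (Ω : Set (Euc d)) (u : Euc d → ℝ) (S : Set (Euc d)) : Set (Euc d) :=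
  ⋃ x ∈ S, chiSub Ω u x

/-- The lattice `hℤ^d`. -/
def latt (d : ℕ) (h : ℝ) : Set (Euc d) := {x | ∀ i, ∃ m : ℤ, x i = m * h}

/-- `Ω_h = Ω ∩ hℤ^d`. -/
def meshΩ {d : ℕ} (Ω : Set (Euc d)) (h : ℝ) : Set (Euc d) := Ω ∩ latt d h

/-- An integer direction `e ∈ ℤ^d` as a vector of `ℝ^d`. -/
def intVec {d : ℕ} (e : Fin d → ℤ) : Euc d :=
  (EuclideanSpace.equiv (Fin d) ℝ).symm (fun i => (e i : ℝ))

/-- `h^e_x = sup { r h : r ∈ [0,1], x + r h e ∈ closure Ω }`. -/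
def hev {d : ℕ} (Ω : Set (Euc d)) (h : ℝ) (x : Euc d) (e : Fin d → ℤ) : ℝ :=
  sSup {t | ∃ r ∈ Icc (0:ℝ) 1, t = r * h ∧ x + (r * h) • intVec e ∈ closure Ω}

/-- The boundary nodes `∂Ω_h` for the direction set `V`. -/
def meshBd {d : ℕ} (Ω : Set (Euc d)) (h : ℝ) (V : Set (Fin d → ℤ)) : Set (Euc d) :=
  {x ∈ frontier Ω | ∃ y ∈ meshΩ Ω h, ∃ e ∈ V, x = y + hev Ω h y e • intVec e}

/-- The convex envelope of `u` with constraints on `N`: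
`Γ(u)(x) = sup {L x : L affine, L ≤ u on N}`. -/
def convEnv {d : ℕ} (N : Set (Euc d)) (u : Euc d → ℝ) (x : Euc d) : ℝ :=
  sSup {t | ∃ (p : Euc d) (c : ℝ),
    (∀ y ∈ N, (inner ℝ p y : ℝ) + c ≤ u y) ∧ t = (inner ℝ p x : ℝ) + c}

/-- The second difference operator `Δ_e u_h (x)`. -/
def deltaE {d : ℕ} (Ω : Set (Euc d)) (h : ℝ) (u : Euc d → ℝ) (e : Fin d → ℤ)
    (x : Euc d) : ℝ :=
  2 / (hev Ω h x e + hev Ω h x (-e)) *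
    ((u (x + hev Ω h x e • intVec e) - u x) / hev Ω h x e +
     (u (x + hev Ω h x (-e) • intVec (-e)) - u x) / hev Ω h x (-e))

/-- Discrete convexity with the full set of directions `e ∈ ℤ^d \ {0}`. -/
def DiscConvex {d : ℕ} (Ω : Set (Euc d)) (h : ℝ) (u : Euc d → ℝ) : Prop :=
  ∀ x ∈ meshΩ Ω h, ∀ e : Fin d → ℤ, e ≠ 0 → 0 ≤ deltaE Ω h u e x

/-!
On `Ω`, `ũ` is the supremum of the supporting affine functions of `u`; these exist at every
point of the open set `Ω` by Hahn–Banach applied to the strict epigraph, so `ũ = u` on `Ω`, and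
`ũ`, a supremum of affine functions, is convex with the same subgradients as `u` there. When all
subgradients have norm at most `K`, every affine piece is `K`-Lipschitz, hence so is `ũ`, and it
is finite because it is finite at one point. On `∂Ω`, `ũ ≤ g` by continuity of `g`, while the
supporting planes of `u` at points of the segment from `x₀ ∈ Ω` to `x` give lower bounds that
converge to `g x`.
-/

open InnerProductSpace

theorem ConvexOn.exists_dual_le_of_isOpen {E : Type*} [NormedAddCommGroup E] [NormedSpace ℝ E]
    [FiniteDimensional ℝ E] {s : Set E} {u : E → ℝ} (hu : ConvexOn ℝ s u) (hs : IsOpen s)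
    {x : E} (hx : x ∈ s) : ∃ L : StrongDual ℝ E, ∀ y ∈ s, u x + L (y - x) ≤ u y := by
  set S : Set (E × ℝ) := {p | p.1 ∈ s ∧ u p.1 < p.2}
  have hS_open : IsOpen S := by
    have h := (hu.continuousOn hs).comp continuousOn_fst (fun p (hp : p ∈ s ×ˢ univ) => hp.1)
      |> continuousOn_snd.sub |>.isOpen_inter_preimage (hs.prod isOpen_univ) (isOpen_Ioi (a := 0))
    convert h using 1
    ext p
    simp [S, sub_pos]
  obtain ⟨f, hf⟩ := geometric_hahn_banach_open_point hu.convex_strict_epigraph hS_open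
    (fun h => lt_irrefl _ h.2 : (x, u x) ∉ S)
  set φ : StrongDual ℝ E := f.comp (ContinuousLinearMap.inl ℝ E ℝ)
  set c : ℝ := f (0, 1)
  have hf_apply : ∀ y t, f (y, t) = φ y + t * c := fun y t => by
    rw [show ((y, t) : E × ℝ) = (y, 0) + t • (0, 1) by simp, map_add, map_smul, smul_eq_mul]
    rfl
  have hc : c < 0 := by
    have := hf (x, u x + 1) ⟨hx, lt_add_one _⟩
    rw [hf_apply, hf_apply] at this
    linarith
  refine ⟨(-c)⁻¹ • φ, fun y hy => le_of_forall_gt fun t ht => ?_⟩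
  have hyt := hf (y, t) ⟨hy, ht⟩
  rw [hf_apply, hf_apply] at hyt
  have hc' : 0 < -c := neg_pos.2 hc
  rw [smul_apply, map_sub, smul_eq_mul, ← lt_sub_iff_add_lt', inv_mul_lt_iff₀ hc']
  linarith

variable {d : ℕ} {Ω : Set (Euc d)} {u : Euc d → ℝ}

theorem ConvexOn.subdiff_nonempty (hu : ConvexOn ℝ Ω u) (hop : IsOpen Ω) {x : Euc d}
    (hx : x ∈ Ω) : (subdiff Ω u x).Nonempty := by
  obtain ⟨L, hL⟩ := hu.exists_dual_le_of_isOpen hop hx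
  exact ⟨(toDual ℝ (Euc d)).symm L, fun y hy => by rw [toDual_symm_apply]; exact hL y hy⟩

theorem le_extFun {y q : Euc d} (hy : y ∈ Ω) (hq : q ∈ subdiff Ω u y) (x : Euc d) :
    ((u y + inner ℝ q (x - y) : ℝ) : EReal) ≤ extFun Ω u x :=
  le_iSup₂_of_le y hy (le_iSup₂_of_le q hq le_rfl)

theorem extFun_le {x : Euc d} {c : EReal}
    (h : ∀ y ∈ Ω, ∀ q ∈ subdiff Ω u y, ((u y + inner ℝ q (x - y) : ℝ) : EReal) ≤ c) :
    extFun Ω u x ≤ c :=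
  iSup₂_le fun y hy => iSup₂_le fun q hq => h y hy q hq

theorem extFun_eq_of_mem (hu : ConvexOn ℝ Ω u) (hop : IsOpen Ω) {x : Euc d} (hx : x ∈ Ω) :
    extFun Ω u x = u x := by
  refine le_antisymm (extFun_le fun y hy q hq => EReal.coe_le_coe (hq x hx)) ?_
  obtain ⟨p, hp⟩ := hu.subdiff_nonempty hop hx
  simpa using le_extFun hx hp x

theorem extFun_combo_le {x y : Euc d} {a b : ℝ} (ha : 0 ≤ a) (hb : 0 ≤ b) (hab : a + b = 1) :
    extFun Ω u (a • x + b • y) ≤ (a : EReal) * extFun Ω u x + (b : EReal) * extFun Ω u y := by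
  refine extFun_le fun z hz q hq => ?_
  have hsplit : u z + inner ℝ q (a • x + b • y - z)
      = a * (u z + inner ℝ q (x - z)) + b * (u z + inner ℝ q (y - z)) := by
    rw [show a • x + b • y - z = a • (x - z) + b • (y - z) by
      rw [smul_sub, smul_sub, sub_add_sub_comm, ← add_smul, hab, one_smul],
      inner_add_right, real_inner_smul_right, real_inner_smul_right]
    linear_combination (-u z) * hab
  rw [hsplit, EReal.coe_add, EReal.coe_mul, EReal.coe_mul]
  gcongr
  exacts [le_extFun hz hq x, le_extFun hz hq y]

theorem subdiff_eq_chiSub (hu : ConvexOn ℝ Ω u) (hop : IsOpen Ω) {x : Euc d} (hx : x ∈ Ω) :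
    subdiff Ω u x = chiSub Ω u x := by
  ext p
  constructor
  · intro hp z
    rw [extFun_eq_of_mem hu hop hx, ← EReal.coe_add]
    exact le_extFun hx hp z
  · intro hp y hy
    have h := hp y
    rw [extFun_eq_of_mem hu hop hx, extFun_eq_of_mem hu hop hy, ← EReal.coe_add] at h
    exact EReal.coe_le_coe_iff.1 h

theorem extFun_le_extFun_add {K : ℝ} (hK : ∀ y ∈ Ω, ∀ q ∈ subdiff Ω u y, ‖q‖ ≤ K)
    (x x' : Euc d) : extFun Ω u x ≤ extFun Ω u x' + (K * ‖x - x'‖ : ℝ) := by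
  refine extFun_le fun y hy q hq => ?_
  have hslope : inner ℝ q (x - x') ≤ K * ‖x - x'‖ :=
    (real_inner_le_norm q (x - x')).trans (by gcongr; exact hK y hy q hq)
  rw [show u y + inner ℝ q (x - y) = (u y + inner ℝ q (x' - y)) + inner ℝ q (x - x') by
    rw [add_assoc, ← inner_add_right, sub_add_sub_cancel'], EReal.coe_add]
  exact add_le_add (le_extFun hy hq x') (EReal.coe_le_coe hslope)

theorem exists_continuous_extFun_eq (hu : ConvexOn ℝ Ω u) (hop : IsOpen Ω) (hne : Ω.Nonempty)
    {K : ℝ} (hK : ∀ y ∈ Ω, ∀ q ∈ subdiff Ω u y, ‖q‖ ≤ K) :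
    ∃ v : Euc d → ℝ, Continuous v ∧ ∀ x, extFun Ω u x = v x := by
  obtain ⟨x₀, hx₀⟩ := hne
  obtain ⟨p₀, hp₀⟩ := hu.subdiff_nonempty hop hx₀
  have hfinite : ∀ x, extFun Ω u x = (extFun Ω u x).toReal := fun x => by
    refine (EReal.coe_toReal (ne_top_of_le_ne_top ?_ (extFun_le_extFun_add hK x x₀))
      (ne_bot_of_le_ne_bot (EReal.coe_ne_bot _) (le_extFun hx₀ hp₀ x))).symm
    rw [extFun_eq_of_mem hu hop hx₀, ← EReal.coe_add]
    exact EReal.coe_ne_top _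
  refine ⟨fun x => (extFun Ω u x).toReal, ?_, hfinite⟩
  refine (LipschitzWith.of_le_add_mul' K fun x x' => ?_).continuous
  have h := extFun_le_extFun_add hK x x'
  rw [hfinite x, hfinite x', ← EReal.coe_add, EReal.coe_le_coe_iff] at h
  rwa [dist_eq_norm]

theorem extFun_le_of_mem_closure {g : Euc d → ℝ} {x : Euc d} (hx : x ∈ closure Ω)
    (hg : ContinuousWithinAt g (closure Ω) x) (hgu : ∀ y ∈ Ω, u y = g y) :
    extFun Ω u x ≤ g x := by
  refine extFun_le fun y hy q hq => EReal.coe_le_coe ?_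
  have := mem_closure_iff_nhdsWithin_neBot.1 hx
  have haffine : Tendsto (fun z => u y + inner ℝ q (z - y)) (𝓝[Ω] x)
      (𝓝 (u y + inner ℝ q (x - y))) :=
    ((continuous_const.add (continuous_const.inner (continuous_id.sub continuous_const))).tendsto
      x).mono_left nhdsWithin_le_nhds
  refine le_of_tendsto_of_tendsto haffine (hg.mono subset_closure)
    (eventually_mem_nhdsWithin.mono fun z hz => ?_)
  rw [← hgu z hz]
  exact hq z hz

theorem le_extFun_of_mem_segment (hu : ConvexOn ℝ Ω u) (hop : IsOpen Ω) {x₀ x : Euc d}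
    (hx₀ : x₀ ∈ Ω) {t : ℝ} (ht : t ∈ Ioo (0 : ℝ) 1) (hxt : x₀ + t • (x - x₀) ∈ Ω) :
    ((u (x₀ + t • (x - x₀)) + (1 - t) / t * (u (x₀ + t • (x - x₀)) - u x₀) : ℝ) : EReal)
      ≤ extFun Ω u x := by
  obtain ⟨q, hq⟩ := hu.subdiff_nonempty hop hxt
  refine le_trans (EReal.coe_le_coe ?_) (le_extFun hxt hq x)
  set xt := x₀ + t • (x - x₀)
  have hx_sub : x - xt = ((1 - t) / t) • (xt - x₀) := by
    simp only [xt, add_sub_cancel_left, smul_smul, div_mul_cancel₀ _ ht.1.ne']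
    module
  have hsupport : u xt - u x₀ ≤ inner ℝ q (xt - x₀) := by
    have := hq x₀ hx₀
    rw [← neg_sub, inner_neg_right] at this
    linarith
  rw [hx_sub, real_inner_smul_right]
  gcongr
  exact div_nonneg (sub_nonneg.2 ht.2.le) ht.1.le

theorem le_extFun_of_mem_closure (hu : ConvexOn ℝ Ω u) (hop : IsOpen Ω) {g : Euc d → ℝ}
    {x : Euc d} (hx : x ∈ closure Ω) (hg : ContinuousWithinAt g (closure Ω) x)
    (hgu : ∀ y ∈ Ω, u y = g y) : (g x : EReal) ≤ extFun Ω u x := by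
  obtain ⟨x₀, hx₀⟩ := closure_nonempty_iff.1 ⟨x, hx⟩
  set xt : ℝ → Euc d := fun t => x₀ + t • (x - x₀)
  have hxt_mem : ∀ t ∈ Ioo (0 : ℝ) 1, xt t ∈ Ω := fun t ht => by
    have h := hu.1.combo_interior_closure_mem_interior (hop.interior_eq.symm ▸ hx₀) hx
      (sub_pos.2 ht.2) ht.1.le (sub_add_cancel 1 t)
    rw [hop.interior_eq] at h
    convert h using 1
    simp only [xt]
    module
  have : (𝓝[Ioo (0 : ℝ) 1] 1).NeBot := right_nhdsWithin_Ioo_neBot zero_lt_one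
  have hxt_lim : Tendsto xt (𝓝[Ioo (0 : ℝ) 1] 1) (𝓝[closure Ω] x) := by
    refine tendsto_nhdsWithin_of_tendsto_nhds_of_eventually_within _ ?_
      (eventually_mem_nhdsWithin.mono fun t ht => subset_closure (hxt_mem t ht))
    have hcont : Continuous xt := by fun_prop
    simpa [xt] using hcont.continuousWithinAt.tendsto (x := 1) (s := Ioo 0 1)
  have hu_lim : Tendsto (fun t => u (xt t)) (𝓝[Ioo (0 : ℝ) 1] 1) (𝓝 (g x)) :=
    (hg.tendsto.comp hxt_lim).congr' (eventually_mem_nhdsWithin.mono fun t ht =>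
      (hgu _ (hxt_mem t ht)).symm)
  have hcoef_lim : Tendsto (fun t : ℝ => (1 - t) / t) (𝓝[Ioo (0 : ℝ) 1] 1) (𝓝 0) := by
    have h : ContinuousAt (fun t : ℝ => (1 - t) / t) 1 := by fun_prop (disch := norm_num)
    simpa using h.tendsto.mono_left nhdsWithin_le_nhds
  have hbound_lim := hu_lim.add (hcoef_lim.mul (hu_lim.sub_const (u x₀)))
  rw [zero_mul, add_zero] at hbound_lim
  exact le_of_tendsto ((continuous_coe_real_ereal.tendsto _).comp hbound_lim)
    (eventually_mem_nhdsWithin.mono fun t ht => le_extFun_of_mem_segment hu hop hx₀ ht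
      (hxt_mem t ht))

theorem statement0_general {d : ℕ} (Ω : Set (Euc d))
    (hne : Ω.Nonempty) (hop : IsOpen Ω)
    (u : Euc d → ℝ) (hu : ConvexOn ℝ Ω u) :
    ((∀ x y : Euc d, ∀ a b : ℝ, 0 ≤ a → 0 ≤ b → a + b = 1 →
        extFun Ω u (a • x + b • y) ≤ (a : EReal) * extFun Ω u x + (b : EReal) * extFun Ω u y) ∧
      (∀ x ∈ Ω, extFun Ω u x = ((u x : ℝ) : EReal))) ∧
    (∀ x ∈ Ω, subdiff Ω u x = chiSub Ω u x) ∧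
    ((∃ M : ℝ, ∀ x ∈ Ω, |u x| ≤ M) → Bornology.IsBounded (subdiffSet Ω u Ω) →
      ∃ v : Euc d → ℝ, Continuous v ∧ ∀ x : Euc d, extFun Ω u x = ((v x : ℝ) : EReal)) ∧
    (∀ g : Euc d → ℝ, ContinuousOn g (closure Ω) → ConvexOn ℝ (closure Ω) g →
      (∀ x ∈ Ω, u x = g x) → ∀ x ∈ closure Ω, extFun Ω u x = ((g x : ℝ) : EReal)) := by
  refine ⟨⟨fun x y a b ha hb hab => extFun_combo_le ha hb hab,
    fun x hx => extFun_eq_of_mem hu hop hx⟩, fun x hx => subdiff_eq_chiSub hu hop hx,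
    fun _ hbdd => ?_, fun g hg _ hgu x hx => ?_⟩
  · obtain ⟨K, hK⟩ := isBounded_iff_forall_norm_le.1 hbdd
    exact exists_continuous_extFun_eq hu hop hne fun y hy q hq => hK q (mem_biUnion hy hq)
  · exact le_antisymm (extFun_le_of_mem_closure hx (hg x hx) hgu)
      (le_extFun_of_mem_closure hu hop hx (hg x hx) hgu)

/-- properties of the convex extension `ũ`:
(i) `ũ` is convex on `ℝ^d` and `ũ = u` on `Ω`;
(ii) `∂u(x) = χ_u(x)` for all `x ∈ Ω`;
(iii) if `u` is bounded on `Ω` and `∂u(Ω)` is bounded, then `ũ` is real-valued and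
continuous on `ℝ^d`;
(iv) if `u` is the restriction to `Ω` of a function continuous and convex on `closure Ω`,
then `ũ` coincides with that function on `closure Ω`. -/
theorem statement0 {d : ℕ} (hd : 1 ≤ d) (Ω : Set (Euc d))
    (hne : Ω.Nonempty) (hbd : Bornology.IsBounded Ω) (hop : IsOpen Ω) (hcv : Convex ℝ Ω)
    (u : Euc d → ℝ) (hu : ConvexOn ℝ Ω u) :
    ((∀ x y : Euc d, ∀ a b : ℝ, 0 ≤ a → 0 ≤ b → a + b = 1 →
        extFun Ω u (a • x + b • y) ≤ (a : EReal) * extFun Ω u x + (b : EReal) * extFun Ω u y) ∧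
      (∀ x ∈ Ω, extFun Ω u x = ((u x : ℝ) : EReal))) ∧
    (∀ x ∈ Ω, subdiff Ω u x = chiSub Ω u x) ∧
    ((∃ M : ℝ, ∀ x ∈ Ω, |u x| ≤ M) → Bornology.IsBounded (subdiffSet Ω u Ω) →
      ∃ v : Euc d → ℝ, Continuous v ∧ ∀ x : Euc d, extFun Ω u x = ((v x : ℝ) : EReal)) ∧
    (∀ g : Euc d → ℝ, ContinuousOn g (closure Ω) → ConvexOn ℝ (closure Ω) g →
      (∀ x ∈ Ω, u x = g x) → ∀ x ∈ closure Ω, extFun Ω u x = ((g x : ℝ) : EReal)) :=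
  statement0_general Ω hne hop u hu

end
end

section
/- Let g : ℝ^d → ℝ be a convex function and let u_h be a mesh function with u_h(x) = g(x) for all x ∈ ∂Ω_h. Then the convex envelope satisfies Γ(u_h)(x) = u_h(x) for every x ∈ ∂Ω_h. -/
open Set MeasureTheory Filter Topology

noncomputable section

/-! Let `x ∈ ∂Ω_h`. Since `x ∉ Ω` and `Ω` is open and convex, some `p` separates `x` strictly from
`Ω`, hence weakly from `closure Ω ⊇ ∂Ω_h`. Any affine minorant `ℓ` of the convex `g` is a minorant of
`u_h` on `∂Ω_h`; tilting it to `ℓ - M ⟪p, · - x⟫` keeps it below `u_h` there, leaves `ℓ(x)` unchanged,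
and for `M` large pushes it below `u_h` on the finitely many interior nodes. Since `ℓ(x)` can be
any value below `g(x) = u_h(x)`, the envelope at `x` equals `u_h(x)`. -/

open scoped InnerProductSpace

theorem finite_inter_latt {d : ℕ} {S : Set (Euc d)} (hS : Bornology.IsBounded S) (h : ℝ) :
    (S ∩ latt d h).Finite := by
  set ψ : Euc d → (Fin d → ℤ) := fun y i => round (y i / h)
  have hψ : ∀ y ∈ latt d h, ∀ i, (ψ y i : ℝ) * h = y i := by
    intro y hy i
    obtain ⟨m, hm⟩ := hy i
    rcases eq_or_ne h 0 with rfl | hh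
    · simp [hm]
    · simp [ψ, hm, hh]
  have hinj : InjOn ψ (S ∩ latt d h) := fun y hy z hz hyz => by
    ext i
    rw [← hψ y hy.2 i, ← hψ z hz.2 i, hyz]
  obtain ⟨C, hC⟩ := isBounded_iff_forall_norm_le.1 hS
  have hbdd : Bornology.IsBounded (ψ '' (S ∩ latt d h)) := by
    refine isBounded_iff_forall_norm_le.2 ⟨C / |h| + 1 / 2, ?_⟩
    rintro _ ⟨y, hy, rfl⟩
    refine ((pi_norm_le_iff_of_nonneg (r := ‖y‖ / |h| + 1 / 2) (by positivity)).2 fun i => ?_).trans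
      (by gcongr; exact hC y hy.1)
    calc ‖ψ y i‖ = |(round (y i / h) : ℝ)| := Int.norm_eq_abs _
      _ ≤ |y i / h| + 1 / 2 := by
        linarith [abs_sub_round (y i / h), abs_sub_abs_le_abs_sub (round (y i / h) : ℝ) (y i / h),
          abs_sub_comm (y i / h) (round (y i / h) : ℝ)]
      _ ≤ ‖y‖ / |h| + 1 / 2 := by
        rw [abs_div, ← Real.norm_eq_abs]
        gcongr
        exact PiLp.norm_apply_le y i
  exact (hbdd.isCompact_closure.finite_of_discrete.subset subset_closure).of_finite_image hinj

theorem Set.Finite.exists_nonneg_le_mul {ι : Type*} {s : Set ι} (hs : s.Finite) (f w : ι → ℝ)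
    (hw : ∀ i ∈ s, 0 < w i) : ∃ M : ℝ, 0 ≤ M ∧ ∀ i ∈ s, f i ≤ M * w i := by
  obtain ⟨M, hM⟩ := (hs.image fun i => f i / w i).bddAbove
  exact ⟨max M 0, le_max_right _ _, fun i hi =>
    (div_le_iff₀ (hw i hi)).1 ((hM ⟨i, hi, rfl⟩).trans (le_max_left _ _))⟩

section InnerProductSpace

variable {E : Type*} [NormedAddCommGroup E] [InnerProductSpace ℝ E]

theorem Convex.exists_inner_lt_of_isOpen_of_notMem [CompleteSpace E] {s : Set E} {x : E}
    (hs : Convex ℝ s) (hso : IsOpen s) (hx : x ∉ s) :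
    ∃ p : E, (∀ y ∈ s, ⟪p, y⟫_ℝ < ⟪p, x⟫_ℝ) ∧ ∀ y ∈ closure s, ⟪p, y⟫_ℝ ≤ ⟪p, x⟫_ℝ := by
  obtain ⟨f, hf⟩ := geometric_hahn_banach_open_point hs hso hx
  set p := (InnerProductSpace.toDual ℝ E).symm f
  have hp : ∀ y, ⟪p, y⟫_ℝ = f y := fun y => InnerProductSpace.toDual_symm_apply
  have hlt : ∀ y ∈ s, ⟪p, y⟫_ℝ < ⟪p, x⟫_ℝ := fun y hy => by simpa only [hp] using hf y hy
  refine ⟨p, hlt, fun y hy => ?_⟩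
  exact closure_lt_subset_le (f := fun y => ⟪p, y⟫_ℝ) (by fun_prop) continuous_const
    (closure_mono hlt hy)

theorem ConvexOn.exists_inner_add_le_of_lt [CompleteSpace E] {g : E → ℝ}
    (hg : ConvexOn ℝ univ g) (hgc : LowerSemicontinuous g) {x : E} {a : ℝ} (ha : a < g x) :
    ∃ (q : E) (c : ℝ), (∀ y, ⟪q, y⟫_ℝ + c ≤ g y) ∧ ⟪q, x⟫_ℝ + c = a := by
  obtain ⟨l, c, hle, hx⟩ := hg.exists_affine_le_of_lt (𝕜 := ℝ) (mem_univ x) ha isClosed_univ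
    (hgc.lowerSemicontinuousOn univ)
  have hq : ∀ y, ⟪(InnerProductSpace.toDual ℝ E).symm l, y⟫_ℝ = l y :=
    fun y => InnerProductSpace.toDual_symm_apply
  exact ⟨(InnerProductSpace.toDual ℝ E).symm l, c,
    fun y => by simpa [hq] using hle ⟨y, mem_univ y⟩, by simpa [hq] using hx⟩

theorem exists_inner_add_le_on_union {A B : Set E} (hA : A.Finite) (u : E → ℝ) {x p q : E} {c : ℝ}
    (hpA : ∀ y ∈ A, ⟪p, y⟫_ℝ < ⟪p, x⟫_ℝ) (hpB : ∀ y ∈ B, ⟪p, y⟫_ℝ ≤ ⟪p, x⟫_ℝ)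
    (hqB : ∀ y ∈ B, ⟪q, y⟫_ℝ + c ≤ u y) :
    ∃ (q' : E) (c' : ℝ), (∀ y ∈ A ∪ B, ⟪q', y⟫_ℝ + c' ≤ u y) ∧
      ⟪q', x⟫_ℝ + c' = ⟪q, x⟫_ℝ + c := by
  obtain ⟨M, hM, hMA⟩ := hA.exists_nonneg_le_mul (fun y => ⟪q, y⟫_ℝ + c - u y)
    (fun y => ⟪p, x⟫_ℝ - ⟪p, y⟫_ℝ) fun y hy => sub_pos.2 (hpA y hy)
  have htilt : ∀ y, ⟪q + M • p, y⟫_ℝ + (c - M * ⟪p, x⟫_ℝ)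
      = ⟪q, y⟫_ℝ + c - M * (⟪p, x⟫_ℝ - ⟪p, y⟫_ℝ) := fun y => by
    rw [inner_add_left, real_inner_smul_left]
    ring
  refine ⟨q + M • p, c - M * ⟪p, x⟫_ℝ, ?_, by rw [htilt, sub_self, mul_zero, sub_zero]⟩
  rintro y (hy | hy) <;> rw [htilt]
  · linarith [hMA y hy]
  · nlinarith [hqB y hy, hpB y hy]

end InnerProductSpace

theorem convEnv_eq_of_forall_lt_exists {d : ℕ} {N : Set (Euc d)} {u : Euc d → ℝ} {x : Euc d}
    (hx : x ∈ N) (hlt : ∀ a < u x, ∃ (p : Euc d) (c : ℝ),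
      (∀ y ∈ N, ⟪p, y⟫_ℝ + c ≤ u y) ∧ ⟪p, x⟫_ℝ + c = a) :
    convEnv N u x = u x := by
  refine csSup_eq_of_forall_le_of_forall_lt_exists_gt ?_ ?_ fun w hw => ?_
  · obtain ⟨p, c, hN, hpx⟩ := hlt (u x - 1) (sub_one_lt _)
    exact ⟨u x - 1, p, c, hN, hpx.symm⟩
  · rintro _ ⟨p, c, hN, rfl⟩
    exact hN x hx
  · obtain ⟨a, hwa, hax⟩ := exists_between hw
    obtain ⟨p, c, hN, hpx⟩ := hlt a hax
    exact ⟨a, ⟨p, c, hN, hpx.symm⟩, hwa⟩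

theorem statement2_general {d : ℕ} (Ω : Set (Euc d))
    (hbd : Bornology.IsBounded Ω) (hop : IsOpen Ω) (hcv : Convex ℝ Ω)
    (h : ℝ)
    (V : Set (Fin d → ℤ))
    (g : Euc d → ℝ) (hg : ConvexOn ℝ Set.univ g)
    (u : Euc d → ℝ) (hbc : ∀ x ∈ meshBd Ω h V, u x = g x) :
    ∀ x ∈ meshBd Ω h V, convEnv (meshΩ Ω h ∪ meshBd Ω h V) u x = u x := by
  intro x hx
  have hxΩ : x ∉ Ω := disjoint_left.1 (disjoint_frontier_iff_isOpen.2 hop) hx.1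
  obtain ⟨p, hpΩ, hpcl⟩ := hcv.exists_inner_lt_of_isOpen_of_notMem hop hxΩ
  have hgc : LowerSemicontinuous g :=
    (continuousOn_univ.1 (hg.continuousOn isOpen_univ)).lowerSemicontinuous
  refine convEnv_eq_of_forall_lt_exists (Or.inr hx) fun a ha => ?_
  obtain ⟨q, c, hqg, rfl⟩ := hg.exists_inner_add_le_of_lt hgc (hbc x hx ▸ ha)
  exact exists_inner_add_le_on_union (finite_inter_latt hbd h) u (fun y hy => hpΩ y hy.1)
    (fun y hy => hpcl y (frontier_subset_closure hy.1)) fun y hy => (hqg y).trans_eq (hbc y hy).symm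

/-- if `u_h = g` on `∂Ω_h` for a convex function `g : ℝ^d → ℝ`, then the convex
envelope satisfies `Γ(u_h) = u_h` on `∂Ω_h`. -/
theorem statement2 {d : ℕ} (hd : 1 ≤ d) (Ω : Set (Euc d))
    (hne : Ω.Nonempty) (hbd : Bornology.IsBounded Ω) (hop : IsOpen Ω) (hcv : Convex ℝ Ω)
    (h : ℝ) (hh : 0 < h)
    (V : Set (Fin d → ℤ)) (hV0 : (0 : Fin d → ℤ) ∉ V)
    (hVbasis : ∀ i : Fin d, Pi.single i 1 ∈ V)
    (hVsym : ∀ e ∈ V, -e ∈ V)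
    (g : Euc d → ℝ) (hg : ConvexOn ℝ Set.univ g)
    (u : Euc d → ℝ) (hbc : ∀ x ∈ meshBd Ω h V, u x = g x) :
    ∀ x ∈ meshBd Ω h V, convEnv (meshΩ Ω h ∪ meshBd Ω h V) u x = u x :=
  statement2_general Ω hbd hop hcv h V g hg u hbc

end
end

section
/- Let u_h be a mesh function and let x ∈ Ω_h satisfy Γ(u_h)(x) = u_h(x). Then ∂Γ(u_h)(x) = ∂_h u_h(x). -/
open Set MeasureTheory Filter Topology

noncomputable section

/-!
The envelope `Γ(u)` lies below `u` on the node set `N` and, on `conv N`, above every affine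
minorant of `u` on `N`. So at a contact point `Γ(u)(x) = u(x)` an affine function touching `Γ(u)`
from below at `x` also touches `u`, and conversely. Both comparisons need `u` bounded on `N`
(automatic for finitely many nodes), otherwise the `sSup` defining `Γ(u)` takes its junk value.
-/

open scoped RealInnerProductSpace

theorem meshΩ_finite {d : ℕ} {Ω : Set (Euc d)} {h : ℝ} (hh : 0 < h)
    (hbd : Bornology.IsBounded Ω) : (meshΩ Ω h).Finite := by
  obtain ⟨R, hR⟩ := hbd.subset_closedBall 0
  set M : ℤ := ⌈R / h⌉
  let g : (Fin d → ℤ) → Euc d :=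
    fun m => (EuclideanSpace.equiv (Fin d) ℝ).symm (fun i => (m i : ℝ) * h)
  have hcube : (Set.pi univ fun _ : Fin d => Icc (-M) M).Finite :=
    Set.Finite.pi fun _ => Set.finite_Icc _ _
  refine (hcube.image g).subset ?_
  rintro x ⟨hxΩ, hxlatt⟩
  choose m hm using hxlatt
  refine ⟨m, fun i _ => abs_le.1 ?_, by ext i; exact (hm i).symm⟩
  have hxR : ‖x‖ ≤ R := by simpa using hR hxΩ
  have hmR : (|m i| : ℝ) * h ≤ R := by
    calc (|m i| : ℝ) * h = ‖x i‖ := by rw [hm i, Real.norm_eq_abs, abs_mul, abs_of_pos hh]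
      _ ≤ ‖x‖ := PiLp.norm_apply_le x i
      _ ≤ R := hxR
  have : (|m i| : ℝ) ≤ M := ((le_div_iff₀ hh).2 hmR).trans (Int.le_ceil _)
  exact_mod_cast this

section ConvexEnvelope

variable {d : ℕ} {N : Set (Euc d)} {u : Euc d → ℝ}

theorem inner_add_le_of_mem_convexHull {q z : Euc d} {c M : ℝ}
    (hN : ∀ y ∈ N, ⟪q, y⟫ + c ≤ M) (hz : z ∈ convexHull ℝ N) : ⟪q, z⟫ + c ≤ M := by
  have : z ∈ {w | ⟪q, w⟫ ≤ M - c} :=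
    convexHull_min (fun y hy => le_sub_iff_add_le.2 (hN y hy))
      (convex_halfSpace_le (innerₛₗ ℝ q).isLinear (M - c)) hz
  exact le_sub_iff_add_le.1 this

theorem convEnv_le (hu : BddBelow (u '' N)) {y : Euc d} (hy : y ∈ N) :
    convEnv N u y ≤ u y := by
  obtain ⟨m, hm⟩ := hu
  have hconst : ∀ w ∈ N, ⟪(0 : Euc d), w⟫ + m ≤ u w := fun w hw => by
    simpa using hm (mem_image_of_mem u hw)
  refine csSup_le ⟨_, 0, m, hconst, rfl⟩ ?_
  rintro t ⟨p, c, hpc, rfl⟩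
  exact hpc y hy

theorem le_convEnv (hu : BddAbove (u '' N)) {p z : Euc d} {c : ℝ}
    (hpc : ∀ y ∈ N, ⟪p, y⟫ + c ≤ u y) (hz : z ∈ convexHull ℝ N) :
    ⟪p, z⟫ + c ≤ convEnv N u z := by
  obtain ⟨M, hM⟩ := hu
  refine le_csSup ⟨M, ?_⟩ ⟨p, c, hpc, rfl⟩
  rintro t ⟨q, c', hqc', rfl⟩
  exact inner_add_le_of_mem_convexHull
    (fun y hy => (hqc' y hy).trans (hM (mem_image_of_mem u hy))) hz

theorem subdiff_convexHull_convEnv (hbelow : BddBelow (u '' N)) (habove : BddAbove (u '' N))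
    {x : Euc d} (hx : convEnv N u x = u x) :
    subdiff (convexHull ℝ N) (convEnv N u) x = subdiff N u x := by
  ext p
  constructor
  · intro hp y hy
    calc u x + ⟪p, y - x⟫ = convEnv N u x + ⟪p, y - x⟫ := by rw [hx]
      _ ≤ convEnv N u y := hp y (subset_convexHull ℝ N hy)
      _ ≤ u y := convEnv_le hbelow hy
  · intro hp z hz
    have hpc : ∀ y ∈ N, ⟪p, y⟫ + (u x - ⟪p, x⟫) ≤ u y := fun y hy => by
      have := hp y hy
      rw [inner_sub_right] at this
      linarith
    calc convEnv N u x + ⟪p, z - x⟫ = ⟪p, z⟫ + (u x - ⟪p, x⟫) := by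
          rw [hx, inner_sub_right]; ring
      _ ≤ convEnv N u z := le_convEnv habove hpc hz

end ConvexEnvelope

theorem statement5_general {d : ℕ} (Ω : Set (Euc d))
    (hbd : Bornology.IsBounded Ω)
    (h : ℝ) (hh : 0 < h)
    (B : Set (Euc d)) (hBfin : B.Finite)
    (u : Euc d → ℝ)
    (x : Euc d)
    (heq : convEnv (meshΩ Ω h ∪ B) u x = u x) :
    subdiff (convexHull ℝ (meshΩ Ω h ∪ B)) (convEnv (meshΩ Ω h ∪ B) u) x =
      subdiff (meshΩ Ω h ∪ B) u x := by
  have hN : (meshΩ Ω h ∪ B).Finite := (meshΩ_finite hh hbd).union hBfin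
  exact subdiff_convexHull_convEnv (hN.image u).bddBelow (hN.image u).bddAbove heq

/-- if `x ∈ Ω_h` and `Γ(u_h)(x) = u_h(x)`, then `∂Γ(u_h)(x) = ∂_h u_h(x)`. -/
theorem statement5 {d : ℕ} (hd : 1 ≤ d) (Ω : Set (Euc d))
    (hne : Ω.Nonempty) (hbd : Bornology.IsBounded Ω) (hop : IsOpen Ω) (hcv : Convex ℝ Ω)
    (h : ℝ) (hh : 0 < h)
    (B : Set (Euc d)) (hBfin : B.Finite) (hBbd : B ⊆ frontier Ω)
    (u : Euc d → ℝ)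
    (x : Euc d) (hx : x ∈ meshΩ Ω h)
    (heq : convEnv (meshΩ Ω h ∪ B) u x = u x) :
    subdiff (convexHull ℝ (meshΩ Ω h ∪ B)) (convEnv (meshΩ Ω h ∪ B) u) x =
      subdiff (meshΩ Ω h ∪ B) u x :=
  statement5_general Ω hbd h hh B hBfin u x heq

end
end

section
/- Let u : Ω̄ → ℝ be bounded and convex on Ω̄, and let (u_h)_{h>0} be a family of mesh functions converging to u uniformly on Ω̄. Then the convex envelopes Γ(u_h) converge to u uniformly on compact subsets of Ω: for every compact K ⊂ Ω there is h₀ > 0 such that K ⊆ conv(N_h) for all 0 < h < h₀, and sup_{x∈K} |Γ(u_h)(x) − u(x)| → 0 as h → 0. -/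
/-!
Each point `x` of `K` is a convex combination of the vertices of the lattice cube of side `h`
containing it; these are nodes within distance `√d h` of `x`. An affine minorant of `u_h` on the
nodes is therefore bounded at `x` by the values of `u_h` at those nodes, which are close to `u x`
by uniform convergence and uniform continuity of `u` near `K`. Conversely, separating
`(x, u x - η)` from the epigraph of `u` (Hahn–Banach) gives an affine minorant of `u` on
`closure Ω` with value `u x - η` at `x`; lowered by `sup |u_h - u|` it is an affine minorant of
`u_h` on the nodes.
-/

open Set MeasureTheory Filter Topology

noncomputable section

open Metric
open scoped RealInnerProductSpace

section Lattice

variable {d : ℕ}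

theorem EuclideanSpace.norm_le_sqrt_card_mul {v : Euc d} {a : ℝ} (ha : 0 ≤ a)
    (hv : ∀ i, |v i| ≤ a) : ‖v‖ ≤ √d * a :=
  calc ‖v‖ = √(∑ i, ‖v i‖ ^ 2) := EuclideanSpace.norm_eq v
    _ ≤ √(∑ _i : Fin d, a ^ 2) :=
      Real.sqrt_le_sqrt (Finset.sum_le_sum fun i _ =>
        pow_le_pow_left₀ (norm_nonneg _) (hv i) 2)
    _ = √d * a := by simp [Real.sqrt_mul, Real.sqrt_sq ha]

theorem mem_convexHull_latt_cube {h : ℝ} (hh : 0 < h) (x : Euc d) :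
    x ∈ convexHull ℝ {y ∈ latt d h | ∀ i, |y i - x i| ≤ h} := by
  set a : Fin d → ℝ := fun i => ⌊x i / h⌋ * h
  have hxa : ∀ i, x i ∈ Icc (a i) (a i + h) := fun i => by
    have h₁ := Int.floor_le (x i / h)
    have h₂ := Int.lt_floor_add_one (x i / h)
    rw [le_div_iff₀ hh] at h₁
    rw [div_lt_iff₀ hh] at h₂
    exact ⟨h₁, by simp only [a]; linarith⟩
  set e := EuclideanSpace.equiv (Fin d) ℝ
  have hcube : e x ∈ convexHull ℝ (univ.pi fun i => {a i, a i + h}) := by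
    rw [convexHull_pi]
    intro i _
    show e x i ∈ convexHull ℝ {a i, a i + h}
    rw [convexHull_pair, segment_eq_Icc (by linarith)]
    exact hxa i
  have himage : x ∈ convexHull ℝ (e.symm '' univ.pi fun i => {a i, a i + h}) := by
    rw [← IsLinearMap.image_convexHull ⟨map_add e.symm, map_smul e.symm⟩]
    exact ⟨e x, hcube, e.symm_apply_apply x⟩
  refine convexHull_mono ?_ himage
  rintro _ ⟨v, hv, rfl⟩
  have hcoord : ∀ i, e.symm v i = v i := fun _ => rfl
  refine ⟨fun i => ?_, fun i => ?_⟩ <;>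
    obtain hvi | hvi : v i = a i ∨ v i = a i + h := hv i trivial
  · exact ⟨⌊x i / h⌋, hvi⟩
  · exact ⟨⌊x i / h⌋ + 1, by rw [hcoord, hvi]; push_cast; ring⟩
  all_goals
    rw [hcoord, hvi, abs_le]
    constructor <;> linarith [(hxa i).1, (hxa i).2]

theorem mem_convexHull_latt_inter_closedBall {h : ℝ} (hh : 0 < h) (x : Euc d) :
    x ∈ convexHull ℝ (latt d h ∩ closedBall x (√d * h)) := by
  refine convexHull_mono ?_ (mem_convexHull_latt_cube hh x)
  rintro y ⟨hy, hyx⟩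
  exact ⟨hy, mem_closedBall_iff_norm.2 (EuclideanSpace.norm_le_sqrt_card_mul hh.le hyx)⟩

theorem mem_convexHull_meshΩ_inter_closedBall {Ω : Set (Euc d)} {h : ℝ} (hh : 0 < h)
    {x : Euc d} (hΩ : closedBall x (√d * h) ⊆ Ω) :
    x ∈ convexHull ℝ (meshΩ Ω h ∩ closedBall x (√d * h)) := by
  refine convexHull_mono ?_ (mem_convexHull_latt_inter_closedBall hh x)
  rintro y ⟨hyl, hyx⟩
  exact ⟨⟨hΩ hyx, hyl⟩, hyx⟩

end Lattice

theorem inner_add_le_of_mem_convexHull_s9 {E : Type*} [NormedAddCommGroup E] [InnerProductSpace ℝ E]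
    {S : Set E} {p x : E} {c a : ℝ} (hS : ∀ y ∈ S, ⟪p, y⟫ + c ≤ a) (hx : x ∈ convexHull ℝ S) :
    ⟪p, x⟫ + c ≤ a := by
  have hconv : Convex ℝ {y : E | ⟪p, y⟫ ≤ a - c} :=
    convex_halfSpace_le (innerₛₗ ℝ p).isLinear (a - c)
  have := convexHull_min (fun y hy => le_sub_iff_add_le.2 (hS y hy)) hconv hx
  exact le_sub_iff_add_le.1 this

section ConvexEnvelope

variable {d : ℕ} {N S : Set (Euc d)} {v : Euc d → ℝ} {x p : Euc d} {c a : ℝ}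

theorem le_convEnv_s9 (hSN : S ⊆ N) (hx : x ∈ convexHull ℝ S) (hSa : ∀ y ∈ S, v y ≤ a)
    (hL : ∀ y ∈ N, ⟪p, y⟫ + c ≤ v y) : ⟪p, x⟫ + c ≤ convEnv N v x := by
  refine le_csSup ⟨a, ?_⟩ ⟨p, c, hL, rfl⟩
  rintro _ ⟨q, b, hq, rfl⟩
  exact inner_add_le_of_mem_convexHull_s9 (fun y hy => (hq y (hSN hy)).trans (hSa y hy)) hx

theorem convEnv_le_s9 (hSN : S ⊆ N) (hx : x ∈ convexHull ℝ S) (hSa : ∀ y ∈ S, v y ≤ a)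
    (hL : ∀ y ∈ N, ⟪p, y⟫ + c ≤ v y) : convEnv N v x ≤ a := by
  refine csSup_le ⟨_, p, c, hL, rfl⟩ ?_
  rintro _ ⟨q, b, hq, rfl⟩
  exact inner_add_le_of_mem_convexHull_s9 (fun y hy => (hq y (hSN hy)).trans (hSa y hy)) hx

end ConvexEnvelope

theorem ContinuousWithinAt.notMem_closure_epigraph {E : Type*} [TopologicalSpace E] {C : Set E}
    {u : E → ℝ} {x : E} (hu : ContinuousWithinAt u C x) {η : ℝ} (hη : 0 < η) :
    (x, u x - η) ∉ closure {q : E × ℝ | q.1 ∈ C ∧ u q.1 ≤ q.2} := by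
  intro hmem
  have hV : {y | y ∈ C → u x - η / 2 < u y} ∈ 𝓝 x :=
    eventually_nhdsWithin_iff.1 (hu (Ioi_mem_nhds (by linarith)))
  obtain ⟨q, ⟨hqV, hq2⟩, hqC, hqu⟩ := mem_closure_iff_nhds.1 hmem _
    (prod_mem_nhds hV (Iio_mem_nhds (by linarith : u x - η < u x - η / 2)))
  linarith [hqV hqC, mem_Iio.1 hq2]

theorem ConvexOn.exists_affine_le_of_continuousWithinAt {E : Type*} [AddCommGroup E]
    [TopologicalSpace E] [Module ℝ E] [IsTopologicalAddGroup E] [ContinuousSMul ℝ E]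
    [LocallyConvexSpace ℝ E] {C : Set E} {u : E → ℝ} (hu : ConvexOn ℝ C u) {x : E} (hx : x ∈ C)
    (hcont : ContinuousWithinAt u C x) {η : ℝ} (hη : 0 < η) :
    ∃ φ : E →L[ℝ] ℝ, ∀ y ∈ C, u x - η + φ (y - x) ≤ u y := by
  obtain ⟨f, s, hfS, hfx⟩ := geometric_hahn_banach_closed_point hu.convex_epigraph.closure
    isClosed_closure (hcont.notMem_closure_epigraph hη)
  set a := f (0, 1)
  have hf : ∀ y t, f (y, t) = f (y, 0) + t * a := fun y t => by
    have hyt : (y, t) = (y, 0) + t • ((0 : E), (1 : ℝ)) := by simp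
    rw [hyt, map_add, map_smul, smul_eq_mul]
  have hfC : ∀ y ∈ C, f (y, 0) + u y * a < s := fun y hy =>
    hf y (u y) ▸ hfS _ (subset_closure ⟨hy, le_rfl⟩)
  rw [hf] at hfx
  -- `(x, u x)` lies in the epigraph, `(x, u x - η)` on the other side of the hyperplane.
  have ha : a < 0 := by nlinarith [hfC x hx]
  refine ⟨(-a)⁻¹ • f.comp (ContinuousLinearMap.inl ℝ E ℝ), fun y hy => ?_⟩
  have hfy := hfC y hy
  have hsub : f (y - x, 0) = f (y, 0) - f (x, 0) := by rw [← map_sub, Prod.mk_sub_mk, sub_zero]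
  have hdiv : (-a)⁻¹ * (f (y, 0) - f (x, 0)) ≤ u y - u x + η := by
    rw [inv_mul_le_iff₀ (neg_pos.2 ha)]
    nlinarith
  change u x - η + (-a)⁻¹ * f (y - x, 0) ≤ u y
  rw [hsub]
  linarith

theorem abs_convEnv_sub_le {d : ℕ} {C N S : Set (Euc d)} {u v : Euc d → ℝ} {x : Euc d} {ε : ℝ}
    (hu : ConvexOn ℝ C u) (hx : x ∈ C) (hcont : ContinuousWithinAt u C x) (hε : 0 < ε)
    (hNC : N ⊆ C) (hSN : S ⊆ N) (hxS : x ∈ convexHull ℝ S)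
    (hvu : ∀ y ∈ N, |v y - u y| ≤ ε) (hSu : ∀ y ∈ S, u y ≤ u x + ε) :
    |convEnv N v x - u x| ≤ 2 * ε := by
  obtain ⟨φ, hφ⟩ := hu.exists_affine_le_of_continuousWithinAt hx hcont hε
  set p := (InnerProductSpace.toDual ℝ (Euc d)).symm φ
  have hφp : ∀ y, φ y = ⟪p, y⟫ := fun y => (InnerProductSpace.toDual_symm_apply).symm
  have hlow : ∀ y ∈ N, ⟪p, y⟫ + (u x - 2 * ε - ⟪p, x⟫) ≤ v y := fun y hy => by
    have := hφ y (hNC hy)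
    rw [map_sub, hφp, hφp] at this
    linarith [(abs_le.1 (hvu y hy)).1]
  have hupp : ∀ y ∈ S, v y ≤ u x + 2 * ε := fun y hy => by
    linarith [(abs_le.1 (hvu y (hSN hy))).2, hSu y hy]
  have hΓlow := le_convEnv_s9 hSN hxS hupp hlow
  have hΓupp := convEnv_le_s9 hSN hxS hupp hlow
  rw [abs_le]
  constructor <;> linarith

theorem statement9_general {d : ℕ} (Ω : Set (Euc d))
    (hop : IsOpen Ω)
    (B : ℝ → Set (Euc d)) (hB : ∀ h : ℝ, 0 < h → (B h).Finite ∧ B h ⊆ frontier Ω)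
    (u : Euc d → ℝ)
    (hucv : ConvexOn ℝ (closure Ω) u)
    (uh : ℝ → Euc d → ℝ)
    (hcvg : ∀ ε : ℝ, 0 < ε → ∃ h₀ : ℝ, 0 < h₀ ∧ ∀ h : ℝ, 0 < h → h < h₀ →
      ∀ x ∈ meshΩ Ω h ∪ B h, |uh h x - u x| < ε) :
    ∀ K : Set (Euc d), IsCompact K → K ⊆ Ω →
      (∃ h₀ : ℝ, 0 < h₀ ∧ ∀ h : ℝ, 0 < h → h < h₀ →
        K ⊆ convexHull ℝ (meshΩ Ω h ∪ B h)) ∧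
      (∀ ε : ℝ, 0 < ε → ∃ h₁ : ℝ, 0 < h₁ ∧ ∀ h : ℝ, 0 < h → h < h₁ →
        ∀ x ∈ K, |convEnv (meshΩ Ω h ∪ B h) (uh h) x - u x| < ε) := by
  intro K hK hKΩ
  obtain ⟨r, hr, hrΩ⟩ := hK.exists_cthickening_subset_open hop hKΩ
  have hcont : ∀ x ∈ Ω, ContinuousAt u x := fun x hx =>
    hucv.continuousOn_interior.continuousAt
      (isOpen_interior.mem_nhds (interior_maximal subset_closure hop hx))
  have hball : ∀ x ∈ K, ∀ s ≤ r, closedBall x s ⊆ cthickening r K := fun x hx s hs =>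
    (closedBall_subset_cthickening hx s).trans (cthickening_mono hs K)
  have hsmall : ∀ c > 0, ∀ h, 0 < h → h < c / (√d + 1) → √d * h < c := fun c hc h hh hlt => by
    rw [lt_div_iff₀ (by positivity)] at hlt
    nlinarith
  refine ⟨⟨r / (√d + 1), by positivity, fun h hh hlt x hx => ?_⟩, fun ε hε => ?_⟩
  · exact convexHull_mono (inter_subset_left.trans subset_union_left)
      (mem_convexHull_meshΩ_inter_closedBall hh
        ((hball x hx _ (hsmall r hr h hh hlt).le).trans hrΩ))
  obtain ⟨δ, hδ, hδu⟩ := Metric.uniformContinuousOn_iff.1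
    (hK.cthickening.uniformContinuousOn_of_continuous
      fun y hy => (hcont y (hrΩ hy)).continuousWithinAt) (ε / 3) (by positivity)
  obtain ⟨h₀, hh₀, hcvg₀⟩ := hcvg (ε / 3) (by positivity)
  refine ⟨min h₀ (min r δ / (√d + 1)), by positivity, fun h hh hlt x hx => ?_⟩
  have hs : √d * h < min r δ := hsmall _ (by positivity) h hh (hlt.trans_le (min_le_right _ _))
  have hxball := hball x hx _ (hs.le.trans (min_le_left _ _))
  refine (abs_convEnv_sub_le hucv (subset_closure (hKΩ hx))
    (hcont x (hKΩ hx)).continuousWithinAt (by positivity : 0 < ε / 3)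
    (union_subset (fun y hy => subset_closure hy.1) ((hB h hh).2.trans frontier_subset_closure))
    (inter_subset_left.trans subset_union_left)
    (mem_convexHull_meshΩ_inter_closedBall hh (hxball.trans hrΩ))
    (fun y hy => (hcvg₀ h hh (hlt.trans_le (min_le_left _ _)) y hy).le)
    fun y ⟨_, hyx⟩ => ?_).trans_lt (by linarith)
  have hyx' : dist y x < δ := (mem_closedBall.1 hyx).trans_lt (hs.trans_le (min_le_right _ _))
  have := hδu y (hxball hyx) x (self_subset_cthickening K hx) hyx'
  rw [Real.dist_eq] at this
  linarith [(abs_lt.1 this).2]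

/-- if mesh functions `u_h` converge uniformly on `closure Ω` to a bounded
function `u` convex on `closure Ω`, then the convex envelopes `Γ(u_h)` converge to `u`
uniformly on compact subsets of `Ω` (and each compact `K ⊆ Ω` lies in `conv N_h` for small
`h`). -/
theorem statement9 {d : ℕ} (hd : 1 ≤ d) (Ω : Set (Euc d))
    (hne : Ω.Nonempty) (hbd : Bornology.IsBounded Ω) (hop : IsOpen Ω) (hcv : Convex ℝ Ω)
    (B : ℝ → Set (Euc d)) (hB : ∀ h : ℝ, 0 < h → (B h).Finite ∧ B h ⊆ frontier Ω)
    (u : Euc d → ℝ) (hub : ∃ M : ℝ, ∀ x ∈ closure Ω, |u x| ≤ M)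
    (hucv : ConvexOn ℝ (closure Ω) u)
    (uh : ℝ → Euc d → ℝ)
    (hcvg : ∀ ε : ℝ, 0 < ε → ∃ h₀ : ℝ, 0 < h₀ ∧ ∀ h : ℝ, 0 < h → h < h₀ →
      ∀ x ∈ meshΩ Ω h ∪ B h, |uh h x - u x| < ε) :
    ∀ K : Set (Euc d), IsCompact K → K ⊆ Ω →
      (∃ h₀ : ℝ, 0 < h₀ ∧ ∀ h : ℝ, 0 < h → h < h₀ →
        K ⊆ convexHull ℝ (meshΩ Ω h ∪ B h)) ∧
      (∀ ε : ℝ, 0 < ε → ∃ h₁ : ℝ, 0 < h₁ ∧ ∀ h : ℝ, 0 < h → h < h₁ →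
        ∀ x ∈ K, |convEnv (meshΩ Ω h ∪ B h) (uh h) x - u x| < ε) :=
  statement9_general Ω hop B hB u hucv uh hcvg

end
end
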